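/- arXiv:2510.01689 — 2 statements merged into one kernel-verified Lean document; each statement's English description precedes it below -/
import Mathlib

section
/- Group incentive ratio lower bound for Round-Robin: for every coalition size c ≥ 1 and every ε > 0, there exist a number of agents n, a number of indivisible goods m, additive valuations v_1, …, v_n, a profile of strict orderings ≻ with v_a consistent with ≻_a for every a, a coalition C ⊆ [n] with |C| = c, and manipulated orderings ≻'_C, such that for every corrupted agent a ∈ C it holds that v_a(RR_a(≻)) > 0 and v_a(RR_a(≻'_C, ≻_{−C})) ≥ (c + 1 − ε)·v_a(RR_a(≻)). In particular, GIR_RR(c) ≥ c + 1. -/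
/-- A strict total ordering over goods, given as a list from most preferred to
least preferred: it must be a duplicate-free enumeration of all goods. -/
def IsOrder {γ : Type*} [Fintype γ] (l : List γ) : Prop :=
  l.Nodup ∧ ∀ g : γ, g ∈ l

/-- An additive valuation `v` (given by its values on single goods) is consistent
with the strict ordering `l` if strictly more valuable goods appear earlier. -/
def Consistent {γ : Type*} [DecidableEq γ] (v : γ → ℝ) (l : List γ) : Prop :=
  ∀ g g' : γ, v g > v g' → l.idxOf g < l.idxOf g'

/-- State of Round-Robin after `s` stages: the set of remaining goods, together
with the bundle picked so far by each agent.  At stage `s` (0-indexed), agent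
`s % n` picks his most preferred remaining good. -/
def rrState {γ : Type*} [DecidableEq γ] [Fintype γ] (n : ℕ) (hn : 0 < n)
    (pref : Fin n → List γ) : ℕ → Finset γ × (Fin n → Finset γ)
  | 0 => (Finset.univ, fun _ => ∅)
  | s + 1 =>
    let st := rrState n hn pref s
    let agent : Fin n := ⟨s % n, Nat.mod_lt s hn⟩
    match (pref agent).find? (fun g => decide (g ∈ st.1)) with
    | none => st
    | some g => (st.1.erase g, Function.update st.2 agent (insert g (st.2 agent)))

/-- The Round-Robin allocation: the bundle of agent `a` after all goods are picked. -/
def rr {γ : Type*} [DecidableEq γ] [Fintype γ] (n : ℕ) (hn : 0 < n)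
    (pref : Fin n → List γ) (a : Fin n) : Finset γ :=
  (rrState n hn pref (Fintype.card γ)).2 a

/-!
Write `K = D ^ c` and split the `n = c (K + 1)` agents into `c` teams, team `i` being the
coalition member `i` followed by `K` honest agents; goods are named by the round and the agent
that picks them in the truthful run, so that truthfully every agent takes its own column
round by round. Member `i` values at `1` the goods of rounds `w < D ^ (i + 1)` of his own
column and of the honest agent `(i, w)`, and the goods of all members at his *level*
`D ^ i ≤ w < D ^ (i + 1)`; truthfully the others take all of these first, and `i` gets just
his own `D ^ (i + 1)` goods.

Manipulating, member `i` takes in each round `w < D ^ (i + 1)` the good that the honest agent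
`(i, w)` is about to take; that agent then simply picks one step ahead in his own column.
Afterwards member `i` collects the `c (D ^ (i + 1) - D ^ i)` member goods of his level, which
nobody else touches, since every member only ever takes honest goods, goods of his own level or
worthless goods. His value becomes `D ^ (i + 1) + c (D ^ (i + 1) - D ^ i)`, a factor
`c + 1 - c / D` over the truthful one, and `D ≥ c / ε` finishes the proof.
-/

open Finset

theorem Nat.mul_add_lt_mul_add_iff {n x x' j j' : ℕ} (hj : j < n) (hj' : j' < n) :
    x * n + j < x' * n + j' ↔ x < x' ∨ x = x' ∧ j < j' := by
  have key {x x' j j' : ℕ} (hj : j < n) (h : x < x') : x * n + j < x' * n + j' := by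
    have : (x + 1) * n ≤ x' * n := Nat.mul_le_mul_right n h
    rw [Nat.add_mul, one_mul] at this
    omega
  constructor
  · intro h
    rcases lt_trichotomy x x' with h' | rfl | h'
    · exact Or.inl h'
    · exact Or.inr ⟨rfl, by omega⟩
    · exact absurd (key hj' h' (j' := j)) (not_lt.2 h.le)
  · rintro (h | ⟨rfl, h⟩)
    · exact key hj h
    · omega

theorem finProdFinEquiv_lt_finProdFinEquiv {m n : ℕ} {x y : Fin m × Fin n} :
    finProdFinEquiv x < finProdFinEquiv y ↔ toLex x < toLex y := by
  rw [Fin.lt_def, finProdFinEquiv_apply_val, finProdFinEquiv_apply_val, add_comm, mul_comm,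
    add_comm (y.2 : ℕ), mul_comm n, Nat.mul_add_lt_mul_add_iff x.2.isLt y.2.isLt,
    Prod.Lex.toLex_lt_toLex, Fin.lt_def, Fin.lt_def, Fin.ext_iff]

theorem filter_range_mul_mod_eq {n : ℕ} (R : ℕ) (a : Fin n) :
    (range (R * n)).filter (· % n = a) = (range R).image (· * n + a) := by
  ext s
  simp only [mem_filter, mem_range, mem_image]
  constructor
  · rintro ⟨hs, hsa⟩
    exact ⟨s / n, (Nat.div_lt_iff_lt_mul a.pos).2 hs, hsa ▸ Nat.div_add_mod' s n⟩
  · rintro ⟨w, hw, rfl⟩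
    have := (Nat.mul_add_lt_mul_add_iff a.isLt a.pos (j' := 0)).2 (Or.inl hw)
    exact ⟨this, by rw [Nat.mul_add_mod_self_right, Nat.mod_eq_of_lt a.isLt]⟩

section RoundRobin

variable {γ : Type*} [DecidableEq γ] [Fintype γ] {n : ℕ} (hn : 0 < n)
  (pref : Fin n → List γ)

theorem rrState_bundle_mono {s t : ℕ} (hst : s ≤ t) (a : Fin n) :
    (rrState n hn pref s).2 a ⊆ (rrState n hn pref t).2 a := by
  refine monotone_nat_of_le_succ (f := fun s => (rrState n hn pref s).2 a) (fun s => ?_) hst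
  show _ ⊆ (rrState n hn pref (s + 1)).2 a
  rw [rrState]
  split
  · exact le_rfl
  · dsimp only
    rw [Function.update_apply]
    split_ifs with h
    · subst h; exact subset_insert _ _
    · exact le_rfl

theorem rrState_of_schedule (hpref : ∀ a, IsOrder (pref a)) (σ : ℕ → γ) (S : ℕ)
    (hfresh : ∀ s < S, ∀ s' < s, σ s' ≠ σ s)
    (hgreedy : ∀ s < S, ∀ g, (pref ⟨s % n, Nat.mod_lt s hn⟩).idxOf g <
      (pref ⟨s % n, Nat.mod_lt s hn⟩).idxOf (σ s) → ∃ s' < s, σ s' = g) :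
    ∀ s ≤ S, (rrState n hn pref s).1 = univ \ (range s).image σ ∧
      ∀ a, (rrState n hn pref s).2 a = ((range s).filter (· % n = a)).image σ := by
  intro s hs
  induction s with
  | zero => simp [rrState]
  | succ s ih =>
    obtain ⟨hrem, hbundle⟩ := ih (by omega)
    have hremaining (g : γ) : g ∈ (rrState n hn pref s).1 ↔ ∀ s' < s, σ s' ≠ g := by
      simp [hrem]
    have hfind : (pref ⟨s % n, Nat.mod_lt s hn⟩).find?
        (fun g => decide (g ∈ (rrState n hn pref s).1)) = some (σ s) := by
      have hord := hpref ⟨s % n, Nat.mod_lt s hn⟩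
      have hlt := List.idxOf_lt_length_of_mem (hord.2 (σ s))
      rw [List.find?_eq_some_iff_getElem]
      refine ⟨by simpa [hremaining] using hfresh s hs, _, hlt, List.getElem_idxOf hlt,
        fun j hj => ?_⟩
      have hidx := hord.1.idxOf_getElem j (hj.trans hlt)
      simpa [hremaining] using hgreedy s hs _ (by rwa [hidx])
    simp only [rrState, hfind]
    refine ⟨by rw [hrem, range_add_one, image_insert, sdiff_insert], fun a => ?_⟩
    rw [range_add_one, filter_insert, Function.update_apply]
    split_ifs with h₁ h₂ h₂
    · subst h₁; rw [image_insert, hbundle]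
    · exact absurd (congrArg Fin.val h₁).symm h₂
    · exact absurd (Fin.ext h₂).symm h₁
    · exact hbundle a

theorem rrState_bundle_of_schedule (hpref : ∀ a, IsOrder (pref a)) (pick : ℕ → Fin n → γ)
    (R : ℕ) (hinj : ∀ w < R, ∀ w' < R, ∀ a a', pick w a = pick w' a' → w = w' ∧ a = a')
    (hgreedy : ∀ w < R, ∀ a g, (pref a).idxOf g < (pref a).idxOf (pick w a) →
      ∃ w' a', (w' < w ∨ w' = w ∧ a' < a) ∧ pick w' a' = g) (a : Fin n) :
    (rrState n hn pref (R * n)).2 a = (range R).image (pick · a) := by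
  have hdiv (w : ℕ) (a : Fin n) : (w * n + a) / n = w := by
    rw [add_comm, Nat.add_mul_div_right _ _ hn, Nat.div_eq_of_lt a.isLt, zero_add]
  have hmod (w : ℕ) (a : Fin n) : (w * n + a) % n = a := by
    rw [add_comm, Nat.add_mul_mod_self_right, Nat.mod_eq_of_lt a.isLt]
  have hturn (s : ℕ) : s / n * n + s % n = s := Nat.div_add_mod' s n
  have hdivlt {s : ℕ} (hs : s < R * n) : s / n < R := (Nat.div_lt_iff_lt_mul hn).2 hs
  set σ : ℕ → γ := fun s => pick (s / n) ⟨s % n, Nat.mod_lt s hn⟩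
  have hσ (w : ℕ) (a : Fin n) : σ (w * n + a) = pick w a := by
    simp only [σ, hdiv, hmod]
  have hrun := rrState_of_schedule hn pref hpref σ (R * n) ?fresh ?greedy (R * n) le_rfl
  case fresh =>
    intro s hs s' hs' heq
    obtain ⟨h₁, h₂⟩ := hinj _ (hdivlt (hs'.trans hs)) _ (hdivlt hs) _ _ heq
    have h₂ : s' % n = s % n := congrArg Fin.val h₂
    have : s' = s := by rw [← hturn s', ← hturn s, h₁, h₂]
    omega
  case greedy =>
    intro s hs g hg
    obtain ⟨w', a', hlex, rfl⟩ := hgreedy _ (hdivlt hs) _ g hg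
    refine ⟨w' * n + a', ?_, hσ w' a'⟩
    rw [← hturn s, Nat.mul_add_lt_mul_add_iff a'.isLt (Nat.mod_lt s hn)]
    simpa only [Fin.lt_def] using hlex
  rw [hrun.2 a, filter_range_mul_mod_eq, image_image]
  exact image_congr fun w _ => hσ w a

end RoundRobin

section ListByClass

variable {γ : Type*} [Fintype γ] [LinearOrder γ] (cls : γ → ℕ)

noncomputable def listByClass : List γ :=
  (univ : Finset γ).toList.mergeSort fun g g' => decide (toLex (cls g, g) ≤ toLex (cls g', g'))

theorem isOrder_listByClass : IsOrder (listByClass cls) :=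
  ⟨(List.mergeSort_perm _ _).nodup_iff.2 (nodup_toList _),
    fun g => List.mem_mergeSort.2 (mem_toList.2 (mem_univ g))⟩

theorem idxOf_listByClass_lt_iff {g g' : γ} :
    (listByClass cls).idxOf g < (listByClass cls).idxOf g' ↔
      toLex (cls g, g) < toLex (cls g', g') := by
  set l := listByClass cls
  have hsorted : l.Pairwise fun g g' => decide (toLex (cls g, g) ≤ toLex (cls g', g')) :=
    List.pairwise_mergeSort
      (fun _ _ _ h₁ h₂ => by simp only [decide_eq_true_eq] at *; exact h₁.trans h₂)
      (fun g g' => by simpa using le_total _ _) _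
  have hlt (x : γ) : l.idxOf x < l.length :=
    List.idxOf_lt_length_of_mem ((isOrder_listByClass cls).2 x)
  have hle {x y : γ} (h : l.idxOf x < l.idxOf y) : toLex (cls x, x) ≤ toLex (cls y, y) := by
    have := List.pairwise_iff_getElem.1 hsorted _ _ (hlt x) (hlt y) h
    rwa [List.getElem_idxOf, List.getElem_idxOf, decide_eq_true_iff] at this
  constructor
  · intro h
    refine (hle h).lt_of_ne fun heq => h.ne ?_
    rw [show g = g' from (Prod.ext_iff.1 (toLex.injective heq)).2]
  · intro h
    rcases lt_trichotomy (l.idxOf g) (l.idxOf g') with h' | h' | h'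
    · exact h'
    · rw [List.idxOf_inj ((isOrder_listByClass cls).2 g)] at h'
      exact absurd (h' ▸ h) (lt_irrefl _)
    · exact absurd (hle h') (not_le.2 h)

end ListByClass

namespace GIRLowerBound

section Parameters

variable (c D : ℕ)

def window (i : ℕ) : ℕ := D ^ (i + 1)

def gain (i : ℕ) : ℕ := window D i + c * (window D i - D ^ i)

abbrev numRounds : ℕ := (c + 2) * D ^ c

abbrev numAgents : ℕ := c * (D ^ c + 1)

abbrev Agent := Fin (numAgents c D)

abbrev Good := Fin (numRounds c D * numAgents c D)

variable {c D}

theorem numRounds_eq : numRounds c D = (c + 1) * D ^ c + D ^ c := by ring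

theorem window_le_gain (i : ℕ) : window D i ≤ gain c D i := Nat.le_add_right _ _

variable [NeZero D]

theorem window_pos (i : ℕ) : 0 < window D i := Nat.pos_of_ne_zero (pow_ne_zero _ (NeZero.ne D))

theorem pow_le_window (i : ℕ) : D ^ i ≤ window D i :=
  Nat.pow_le_pow_right (Nat.pos_of_neZero D) (Nat.le_succ i)

theorem window_le {i : ℕ} (hi : i < c) : window D i ≤ D ^ c :=
  Nat.pow_le_pow_right (Nat.pos_of_neZero D) hi

theorem gain_le {i : ℕ} (hi : i < c) : gain c D i ≤ (c + 1) * D ^ c := by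
  have := window_le (D := D) hi
  have : c * (window D i - D ^ i) ≤ c * D ^ c := Nat.mul_le_mul_left c (by omega)
  rw [gain]; linarith

theorem level_unique {i i' y : ℕ} (h : D ^ i ≤ y ∧ y < window D i)
    (h' : D ^ i' ≤ y ∧ y < window D i') : i = i' := by
  have hD : 0 < D := Nat.pos_of_neZero D
  by_contra hne
  rcases Nat.lt_or_gt_of_ne hne with hlt | hlt
  · have := Nat.pow_le_pow_right hD (show i + 1 ≤ i' from hlt); rw [window] at h; omega
  · have := Nat.pow_le_pow_right hD (show i' + 1 ≤ i from hlt); rw [window] at h'; omega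

theorem mul_window_le_gain {ε : ℝ} (hcD : (c : ℝ) ≤ ε * D) (i : ℕ) :
    ((c : ℝ) + 1 - ε) * window D i ≤ gain c D i := by
  rw [gain, Nat.cast_add, Nat.cast_mul, Nat.cast_sub (pow_le_window i), window]
  push_cast
  have := mul_le_mul_of_nonneg_right hcD (pow_nonneg (Nat.cast_nonneg D : (0 : ℝ) ≤ D) i)
  rw [pow_succ]
  linarith

end Parameters

section Agents

variable {c D : ℕ}

def team (a : Agent c D) : Fin c := (finProdFinEquiv.symm a).1

def slot (a : Agent c D) : Fin (D ^ c + 1) := (finProdFinEquiv.symm a).2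

def member (i : Fin c) : Agent c D := finProdFinEquiv (i, 0)

def honest (i : Fin c) (u : ℕ) : Agent c D := finProdFinEquiv (i, Fin.ofNat (D ^ c + 1) (u + 1))

@[simp]
theorem team_member (i : Fin c) : team (member i : Agent c D) = i := by simp [team, member]

@[simp]
theorem slot_member (i : Fin c) : slot (member i : Agent c D) = 0 := by simp [slot, member]

@[simp]
theorem team_honest (i : Fin c) (u : ℕ) : team (honest i u : Agent c D) = i := by
  simp [team, honest]

theorem slot_honest (i : Fin c) {u : ℕ} (hu : u < D ^ c) :
    (slot (honest i u : Agent c D) : ℕ) = u + 1 := by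
  simp [slot, honest, Nat.mod_eq_of_lt (Nat.succ_lt_succ hu)]

theorem slot_honest_ne_zero (i : Fin c) {u : ℕ} (hu : u < D ^ c) :
    slot (honest i u : Agent c D) ≠ 0 := fun h => by
  simpa [h] using slot_honest i hu

theorem member_injective : Function.Injective (member : Fin c → Agent c D) := fun i i' h => by
  rw [← team_member i, h, team_member]

theorem honest_inj {i i' : Fin c} {u u' : ℕ} (hu : u < D ^ c) (hu' : u' < D ^ c) :
    (honest i u : Agent c D) = honest i' u' ↔ i = i' ∧ u = u' := by
  refine ⟨fun h => ⟨?_, ?_⟩, fun ⟨h, h'⟩ => h ▸ h' ▸ rfl⟩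
  · rw [← team_honest i u, h, team_honest]
  · have := congrArg (fun a => (slot a : ℕ)) h
    simp only [slot_honest _ hu, slot_honest _ hu'] at this
    omega

theorem member_ne_honest (i i' : Fin c) {u : ℕ} (hu : u < D ^ c) :
    (member i : Agent c D) ≠ honest i' u := fun h =>
  slot_honest_ne_zero i' hu (h ▸ slot_member i)

theorem member_or_honest (a : Agent c D) :
    (∃ i, a = member i) ∨ ∃ i, ∃ u < D ^ c, a = honest i u := by
  obtain ⟨⟨i, j⟩, rfl⟩ := finProdFinEquiv.surjective a
  rcases Fin.eq_zero_or_eq_succ j with rfl | ⟨u, rfl⟩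
  · exact Or.inl ⟨i, rfl⟩
  · refine Or.inr ⟨i, u, u.isLt, ?_⟩
    simp [honest, Fin.ofNat, Nat.mod_eq_of_lt (Nat.succ_lt_succ u.isLt), Fin.succ]

theorem member_lt_honest (i : Fin c) {u : ℕ} (hu : u < D ^ c) :
    (member i : Agent c D) < honest i u := by
  rw [member, honest, finProdFinEquiv_lt_finProdFinEquiv, Prod.Lex.toLex_lt_toLex, Fin.lt_def,
    Fin.lt_def, Fin.val_ofNat, Nat.mod_eq_of_lt (Nat.succ_lt_succ hu)]
  simp

theorem member_lt_member {j j' : Fin c} : (member j : Agent c D) < member j' ↔ j < j' := by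
  rw [member, member, finProdFinEquiv_lt_finProdFinEquiv, Prod.Lex.toLex_lt_toLex]
  simp

end Agents

section Goods

variable {c D : ℕ}

def round (g : Good c D) : ℕ := (finProdFinEquiv.symm g).1

def column (g : Good c D) : Agent c D := (finProdFinEquiv.symm g).2

theorem round_lt (g : Good c D) : round g < numRounds c D := (finProdFinEquiv.symm g).1.isLt

variable [NeZero D]

instance : NeZero (numRounds c D) := ⟨by simp [numRounds, NeZero.ne]⟩

def good (w : ℕ) (a : Agent c D) : Good c D := finProdFinEquiv (Fin.ofNat (numRounds c D) w, a)

theorem round_good {w : ℕ} (hw : w < numRounds c D) (a : Agent c D) : round (good w a) = w := by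
  simp [round, good, Nat.mod_eq_of_lt hw]

@[simp]
theorem column_good (w : ℕ) (a : Agent c D) : column (good w a) = a := by
  simp [column, good]

theorem good_round_column (g : Good c D) : good (round g) (column g) = g := by
  rw [good, round, column, Fin.ofNat_val_eq_self, Prod.mk.eta, Equiv.apply_symm_apply]

theorem good_inj {w w' : ℕ} (hw : w < numRounds c D) (hw' : w' < numRounds c D)
    {a a' : Agent c D} : good w a = good w' a' ↔ w = w' ∧ a = a' := by
  refine ⟨fun h => ⟨?_, ?_⟩, fun ⟨h, h'⟩ => h ▸ h' ▸ rfl⟩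
  · rw [← round_good hw a, h, round_good hw']
  · rw [← column_good w a, h, column_good]

theorem lt_good_iff {w : ℕ} (hw : w < numRounds c D) {g : Good c D} {a : Agent c D} :
    g < good w a ↔ round g < w ∨ round g = w ∧ column g < a := by
  conv_lhs => rw [← good_round_column g]
  rw [good, good, finProdFinEquiv_lt_finProdFinEquiv, Prod.Lex.toLex_lt_toLex, Fin.lt_def,
    Fin.ext_iff]
  simp only [Fin.val_ofNat, Nat.mod_eq_of_lt hw, Nat.mod_eq_of_lt (round_lt g)]

end Goods

section Profile

variable {c D : ℕ}

def Valued (i : Fin c) (g : Good c D) : Prop :=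
  round g < window D i ∧ (column g = member i ∨ column g = honest i (round g) ∨
    D ^ (i : ℕ) ≤ round g ∧ slot (column g) = 0)

instance (i : Fin c) (g : Good c D) : Decidable (Valued i g) := by unfold Valued; infer_instance

def Likes (a : Agent c D) (g : Good c D) : Prop := ∃ i, a = member i ∧ Valued i g

instance (a : Agent c D) (g : Good c D) : Decidable (Likes a g) := by unfold Likes; infer_instance

def valuation (a : Agent c D) (g : Good c D) : ℝ := if Likes a g then 1 else 0

def truthClass (a : Agent c D) (g : Good c D) : ℕ :=
  (if Likes a g then 0 else 2) + if column g = a then 0 else 1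

noncomputable def truthPref (a : Agent c D) : List (Good c D) := listByClass (truthClass a)

theorem likes_member {i : Fin c} {g : Good c D} : Likes (member i) g ↔ Valued i g :=
  ⟨fun ⟨_, h, hv⟩ => member_injective h ▸ hv, fun hv => ⟨i, rfl, hv⟩⟩

theorem not_likes_honest {i : Fin c} {u : ℕ} (hu : u < D ^ c) (g : Good c D) :
    ¬ Likes (honest i u) g := fun ⟨_, h, _⟩ => member_ne_honest _ _ hu h.symm

theorem valuation_nonneg (a : Agent c D) (g : Good c D) : 0 ≤ valuation a g := by
  unfold valuation; split_ifs <;> norm_num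

theorem valuation_member (i : Fin c) (g : Good c D) :
    valuation (member i) g = if Valued i g then 1 else 0 := by
  simp only [valuation, likes_member]

theorem consistent_truthPref (a : Agent c D) : Consistent (valuation a) (truthPref a) := by
  intro g g' h
  rw [truthPref, idxOf_listByClass_lt_iff, Prod.Lex.toLex_lt_toLex]
  refine Or.inl ?_
  simp only [valuation] at h
  split_ifs at h with hg hg' <;> norm_num at h
  simp only [truthClass, if_pos hg, if_neg hg']
  split_ifs <;> omega

end Profile

section TruthfulRun

variable {c D : ℕ} [NeZero D]

theorem valued_good_member {i : Fin c} {w : ℕ} (hw : w < numRounds c D) :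
    Valued i (good w (member i : Agent c D)) ↔ w < window D i := by
  simp [Valued, round_good hw]

theorem truthPref_greedy {w : ℕ} (hw : w < numRounds c D) (a : Agent c D) (g : Good c D)
    (h : (truthPref a).idxOf g < (truthPref a).idxOf (good w a)) :
    ∃ w' a', (w' < w ∨ w' = w ∧ a' < a) ∧ good w' a' = g := by
  refine ⟨round g, column g, ?_, good_round_column g⟩
  rw [truthPref, idxOf_listByClass_lt_iff, Prod.Lex.toLex_lt_toLex] at h
  rcases h with h | ⟨-, h⟩
  · simp only [truthClass, column_good, if_true, add_zero] at h
    have hp : ¬ Likes a (good w a) := fun hp => by simp [hp] at h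
    have hg : Likes a g := by_contra fun hg => by simp [hg, hp] at h; split_ifs at h <;> omega
    obtain ⟨i, rfl, hv⟩ := hg
    rw [likes_member, valued_good_member hw] at hp
    exact Or.inl (hv.1.trans_le (not_lt.1 hp))
  · exact (lt_good_iff hw).1 h

variable (hn : 0 < numAgents c D)

theorem rr_truthPref (a : Agent c D) :
    rr _ hn truthPref a = (range (numRounds c D)).image (good · a) := by
  rw [rr, Fintype.card_fin]
  exact rrState_bundle_of_schedule hn _ (fun a => isOrder_listByClass _) good _
    (fun w hw w' hw' _ _ h => (good_inj hw hw').1 h) (fun w hw => truthPref_greedy hw) a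

theorem sum_valuation_truthPref (i : Fin c) :
    ∑ g ∈ rr _ hn truthPref (member i), valuation (member i) g = window D i := by
  have hwin := window_le (D := D) i.isLt
  rw [rr_truthPref, sum_image fun w hw w' hw' h =>
    ((good_inj (mem_range.1 hw) (mem_range.1 hw')).1 h).1]
  have hval : ∀ w ∈ range (numRounds c D), valuation (member i) (good w (member i)) =
      if w < window D i then (1 : ℝ) else 0 := fun w hw => by
    rw [valuation_member]; exact if_congr (valued_good_member (mem_range.1 hw)) rfl rfl
  rw [sum_congr rfl hval, sum_boole]
  congr
  rw [show (range (numRounds c D)).filter (· < window D i) = range (window D i) by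
    ext w; simp only [mem_filter, mem_range, numRounds_eq]; omega, card_range]

end TruthfulRun

section Manipulation

variable {c D : ℕ}

def manipClass (i : Fin c) (g : Good c D) : ℕ :=
  if round g < window D i ∧ column g = honest i (round g) then 0
  else if D ^ (i : ℕ) ≤ round g ∧ round g < window D i ∧ slot (column g) = 0 then 1
  else if D ^ c ≤ round g ∧ column g = member i then 2
  else 3

noncomputable def manipPref (a : Agent c D) : List (Good c D) :=
  if slot a = 0 then listByClass (manipClass (team a)) else truthPref a

theorem manipPref_member (i : Fin c) :
    manipPref (member i : Agent c D) = listByClass (manipClass i) := by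
  simp [manipPref]

theorem manipPref_honest (i : Fin c) {u : ℕ} (hu : u < D ^ c) :
    manipPref (honest i u : Agent c D) = truthPref (honest i u) := by
  simp [manipPref, slot_honest_ne_zero i hu]

theorem isOrder_manipPref (a : Agent c D) : IsOrder (manipPref a) := by
  unfold manipPref truthPref
  split_ifs <;> exact isOrder_listByClass _

theorem manipClass_cases (i : Fin c) (g : Good c D) :
    (manipClass i g = 0 ∧ round g < window D i ∧ column g = honest i (round g)) ∨
    (manipClass i g = 1 ∧ D ^ (i : ℕ) ≤ round g ∧ round g < window D i ∧
      ∃ j, column g = member j) ∨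
    (manipClass i g = 2 ∧ D ^ c ≤ round g ∧ column g = member i) ∨
    manipClass i g = 3 := by
  unfold manipClass
  split_ifs with h₀ h₁ h₂
  · exact Or.inl ⟨rfl, h₀⟩
  · obtain ⟨j, hj⟩ : ∃ j, column g = member j := by
      obtain ⟨j, hj⟩ | ⟨j, u, hu, hj⟩ := member_or_honest (column g)
      · exact ⟨j, hj⟩
      · exact absurd (hj ▸ h₁.2.2) (slot_honest_ne_zero j hu)
    exact Or.inr (Or.inl ⟨rfl, h₁.1, h₁.2.1, j, hj⟩)
  · exact Or.inr (Or.inr (Or.inl ⟨rfl, h₂⟩))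
  · exact Or.inr (Or.inr (Or.inr rfl))

theorem level_turn_lt_gain {i : Fin c} {y : ℕ} (j : Fin c) (hy : D ^ (i : ℕ) ≤ y)
    (hy' : y < window D i) : window D i + ((y - D ^ (i : ℕ)) * c + j) < gain c D i := by
  have := (Nat.mul_add_lt_mul_add_iff (j' := 0) j.isLt j.pos).2
    (Or.inl (show y - D ^ (i : ℕ) < window D i - D ^ (i : ℕ) by omega))
  rw [gain, mul_comm c]; omega

theorem level_turn_lt_level_turn {i j j' : Fin c} {y y' : ℕ} (hy : D ^ (i : ℕ) ≤ y)
    (h : y < y' ∨ y = y' ∧ j < j') :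
    (y - D ^ (i : ℕ)) * c + j < (y' - D ^ (i : ℕ)) * c + j' := by
  refine (Nat.mul_add_lt_mul_add_iff j.isLt j'.isLt).2 ?_
  rcases h with h | ⟨rfl, h⟩
  · exact Or.inl (by omega)
  · exact Or.inr ⟨rfl, h⟩

variable [NeZero D]

theorem manipClass_good_honest {i : Fin c} {w : ℕ} (hw : w < window D i) :
    manipClass i (good w (honest i w : Agent c D)) = 0 := by
  have := window_le (D := D) i.isLt
  simp [manipClass, round_good (show w < numRounds c D by rw [numRounds_eq]; omega), hw]

theorem manipClass_good_level {i j : Fin c} {y : ℕ} (hy : D ^ (i : ℕ) ≤ y)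
    (hy' : y < window D i) : manipClass i (good y (member j : Agent c D)) = 1 := by
  have := window_le (D := D) i.isLt
  have hyR : y < numRounds c D := by rw [numRounds_eq]; omega
  simp [manipClass, round_good hyR, hy, hy', member_ne_honest _ _ (hy'.trans_le this)]

theorem manipClass_good_top {i : Fin c} {x : ℕ} (hx : D ^ c ≤ x) (hxR : x < numRounds c D) :
    manipClass i (good x (member i : Agent c D)) = 2 := by
  have := window_le (D := D) i.isLt
  simp [manipClass, round_good hxR, hx, show ¬ x < window D i by omega]

variable [NeZero c]

/-- From round `gain c D i` on, member `i` takes worthless goods of his own column that nobody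
else wants. -/
def manipPick (w : ℕ) (a : Agent c D) : Good c D :=
  if slot a = 0 then
    let i := team a
    if w < window D i then good w (honest i w)
    else if w < gain c D i then
      good (D ^ (i : ℕ) + (w - window D i) / c) (member (Fin.ofNat c (w - window D i)))
    else good (D ^ c + (w - gain c D i)) a
  else if (slot a : ℕ) - 1 < window D (team a) ∧ (slot a : ℕ) - 1 ≤ w then good (w + 1) a
  else good w a

theorem manipPick_member_of_lt_window {i : Fin c} {w : ℕ} (hw : w < window D i) :
    manipPick w (member i : Agent c D) = good w (honest i w) := by
  simp [manipPick, hw]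

theorem manipPick_member_of_gain_le {i : Fin c} {w : ℕ} (hw : gain c D i ≤ w) :
    manipPick w (member i : Agent c D) = good (D ^ c + (w - gain c D i)) (member i) := by
  have := window_le_gain (c := c) (D := D) i
  simp [manipPick, show ¬ w < window D i by omega, show ¬ w < gain c D i by omega]

theorem manipPick_member_level {i j : Fin c} {y : ℕ} (hy : D ^ (i : ℕ) ≤ y)
    (hy' : y < window D i) :
    manipPick (window D i + ((y - D ^ (i : ℕ)) * c + j)) (member i : Agent c D) =
      good y (member j) := by
  have hc : 0 < c := Nat.pos_of_neZero c
  have hdiv : ((y - D ^ (i : ℕ)) * c + j) / c = y - D ^ (i : ℕ) := by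
    rw [add_comm, Nat.add_mul_div_right _ _ hc, Nat.div_eq_of_lt j.isLt, zero_add]
  have hmod : Fin.ofNat c ((y - D ^ (i : ℕ)) * c + j) = j := by
    ext; rw [Fin.val_ofNat, add_comm, Nat.add_mul_mod_self_right, Nat.mod_eq_of_lt j.isLt]
  have hgain := level_turn_lt_gain j hy hy'
  simp only [manipPick, slot_member, team_member, if_true, add_tsub_cancel_left, hdiv, hmod,
    if_neg (show ¬ window D i + ((y - D ^ (i : ℕ)) * c + j) < window D i by omega), if_pos hgain]
  congr; omega

theorem exists_level_of_window_le {i : Fin c} {w : ℕ} (h₁ : window D i ≤ w)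
    (h₂ : w < gain c D i) : ∃ y, ∃ j : Fin c, D ^ (i : ℕ) ≤ y ∧ y < window D i ∧
      w = window D i + ((y - D ^ (i : ℕ)) * c + j) := by
  have hq : (w - window D i) / c < window D i - D ^ (i : ℕ) :=
    (Nat.div_lt_iff_lt_mul (Nat.pos_of_neZero c)).2 (by rw [gain] at h₂; rw [mul_comm]; omega)
  have := pow_le_window (D := D) i
  refine ⟨D ^ (i : ℕ) + (w - window D i) / c, Fin.ofNat c (w - window D i),
    Nat.le_add_right _ _, by omega, ?_⟩
  rw [Fin.val_ofNat, add_tsub_cancel_left, Nat.div_add_mod']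
  omega

theorem manipPick_member_cases (i : Fin c) {w : ℕ} :
    (w < window D i ∧ manipPick w (member i : Agent c D) = good w (honest i w)) ∨
    (∃ y, ∃ j : Fin c, D ^ (i : ℕ) ≤ y ∧ y < window D i ∧
      w = window D i + ((y - D ^ (i : ℕ)) * c + j) ∧
      manipPick w (member i : Agent c D) = good y (member j)) ∨
    (gain c D i ≤ w ∧
      manipPick w (member i : Agent c D) = good (D ^ c + (w - gain c D i)) (member i)) := by
  by_cases h₁ : w < window D i
  · exact Or.inl ⟨h₁, manipPick_member_of_lt_window h₁⟩
  by_cases h₂ : w < gain c D i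
  · obtain ⟨y, j, hy, hy', rfl⟩ := exists_level_of_window_le (not_lt.1 h₁) h₂
    exact Or.inr (Or.inl ⟨y, j, hy, hy', rfl, manipPick_member_level hy hy'⟩)
  · exact Or.inr (Or.inr ⟨not_lt.1 h₂, manipPick_member_of_gain_le (not_lt.1 h₂)⟩)

theorem manipPick_honest {i : Fin c} {u : ℕ} (hu : u < D ^ c) (w : ℕ) :
    manipPick w (honest i u : Agent c D) =
      good (if u < window D i ∧ u ≤ w then w + 1 else w) (honest i u) := by
  simp only [manipPick, if_neg (slot_honest_ne_zero i hu), slot_honest i hu, team_honest,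
    add_tsub_cancel_right]
  split_ifs <;> rfl

theorem manipPick_member_ne_honest (i i' : Fin c) {u w w' : ℕ} (hu : u < D ^ c)
    (hw : w < (c + 1) * D ^ c) (hw' : w' < (c + 1) * D ^ c) :
    manipPick w (member i : Agent c D) ≠ manipPick w' (honest i' u) := by
  intro h
  have hR := numRounds_eq (c := c) (D := D)
  have hwin := window_le (D := D) i.isLt
  rw [manipPick_honest hu] at h
  have hround : (if u < window D i' ∧ u ≤ w' then w' + 1 else w') < numRounds c D := by
    split_ifs <;> omega
  rcases manipPick_member_cases (D := D) i (w := w) with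
    ⟨h₁, e⟩ | ⟨y, j, -, hy, -, e⟩ | ⟨h₁, e⟩ <;>
    rw [e, good_inj (by omega) hround] at h
  · obtain ⟨rfl, rfl⟩ := (honest_inj (hwin.trans_lt' h₁) hu).1 h.2
    split_ifs at h with hs <;> omega
  · exact member_ne_honest _ _ hu h.2
  · exact member_ne_honest _ _ hu h.2

theorem manipPick_injOn {w w' : ℕ} (hw : w < (c + 1) * D ^ c) (hw' : w' < (c + 1) * D ^ c)
    {a a' : Agent c D} (h : manipPick w a = manipPick w' a') : w = w' ∧ a = a' := by
  have hR := numRounds_eq (c := c) (D := D)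
  rcases member_or_honest a with ⟨i, rfl⟩ | ⟨i, u, hu, rfl⟩ <;>
    rcases member_or_honest a' with ⟨i', rfl⟩ | ⟨i', u', hu', rfl⟩
  · have hwin := window_le (D := D) i.isLt
    have hwin' := window_le (D := D) i'.isLt
    rcases manipPick_member_cases (D := D) i (w := w) with
      ⟨h₁, e⟩ | ⟨y, j, hy, hy', rfl, e⟩ | ⟨h₁, e⟩ <;>
      rcases manipPick_member_cases (D := D) i' (w := w') with
        ⟨h₂, e'⟩ | ⟨y', j', hz, hz', rfl, e'⟩ | ⟨h₂, e'⟩ <;>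
      rw [e, e', good_inj (by omega) (by omega)] at h
    · obtain ⟨rfl, -⟩ := (honest_inj (hwin.trans_lt' h₁) (hwin'.trans_lt' h₂)).1 h.2
      exact ⟨h.1, rfl⟩
    · exact absurd h.2.symm (member_ne_honest _ _ (hwin.trans_lt' h₁))
    · exact absurd h.2.symm (member_ne_honest _ _ (hwin.trans_lt' h₁))
    · exact absurd h.2 (member_ne_honest _ _ (hwin'.trans_lt' h₂))
    · obtain ⟨rfl, hj⟩ := h
      obtain rfl := member_injective hj
      obtain rfl : i = i' := Fin.ext (level_unique ⟨hy, hy'⟩ ⟨hz, hz'⟩)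
      exact ⟨rfl, rfl⟩
    · omega
    · exact absurd h.2 (member_ne_honest _ _ (hwin'.trans_lt' h₂))
    · omega
    · obtain rfl := member_injective h.2
      exact ⟨by omega, rfl⟩
  · exact absurd h (manipPick_member_ne_honest i i' hu' hw hw')
  · exact absurd h.symm (manipPick_member_ne_honest i' i hu hw' hw)
  · rw [manipPick_honest hu, manipPick_honest hu'] at h
    rw [good_inj (by split_ifs <;> omega) (by split_ifs <;> omega)] at h
    obtain ⟨rfl, rfl⟩ := (honest_inj hu hu').1 h.2
    refine ⟨?_, rfl⟩
    split_ifs at h <;> omega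

theorem manipClass_manipPick_member (i : Fin c) {w : ℕ} (hw : w < (c + 1) * D ^ c) :
    manipClass i (manipPick w (member i : Agent c D)) =
      if w < window D i then 0 else if w < gain c D i then 1 else 2 := by
  rcases manipPick_member_cases (D := D) i (w := w) with
    ⟨h₁, e⟩ | ⟨y, j, hy, hy', rfl, e⟩ | ⟨h₁, e⟩ <;> rw [e]
  · rw [manipClass_good_honest h₁, if_pos h₁]
  · rw [manipClass_good_level hy hy', if_neg (by omega), if_pos (level_turn_lt_gain j hy hy')]
  · have := window_le_gain (c := c) (D := D) i
    rw [manipClass_good_top (by omega) (by rw [numRounds_eq]; omega), if_neg (by omega),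
      if_neg (by omega)]

theorem manipPref_honest_greedy (i : Fin c) {u w : ℕ} (hu : u < D ^ c)
    (hw : w < (c + 1) * D ^ c) {g : Good c D}
    (h : (manipPref (honest i u)).idxOf g <
      (manipPref (honest i u)).idxOf (manipPick w (honest i u : Agent c D))) :
    ∃ w' a', (w' < w ∨ w' = w ∧ a' < honest i u) ∧ manipPick w' a' = g := by
  have hR := numRounds_eq (c := c) (D := D)
  have hcls (g' : Good c D) : truthClass (honest i u) g' =
      2 + if column g' = honest i u then 0 else 1 := by
    simp [truthClass, not_likes_honest hu]
  set x := if u < window D i ∧ u ≤ w then w + 1 else w with hx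
  have hxR : x < numRounds c D := by rw [hx]; split_ifs <;> omega
  rw [manipPref_honest i hu, manipPick_honest hu, ← hx, truthPref, idxOf_listByClass_lt_iff,
    Prod.Lex.toLex_lt_toLex, hcls, hcls, column_good, if_pos rfl] at h
  have hcol : column g = honest i u := by
    by_contra hne
    simp [hne] at h
  simp only [hcol, lt_self_iff_false, lt_good_iff hxR] at h
  have hy : round g < x := by simpa using h
  rw [← good_round_column g, hcol]
  by_cases hyu : u < window D i ∧ round g = u
  · refine ⟨u, member i, ?_, by rw [manipPick_member_of_lt_window hyu.1, hyu.2]⟩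
    have : u ≤ w := by rw [hx] at hy; split_ifs at hy <;> omega
    rcases this.lt_or_eq with h' | rfl
    · exact Or.inl h'
    · exact Or.inr ⟨rfl, member_lt_honest i hu⟩
  by_cases hyu' : u < window D i ∧ u < round g
  · refine ⟨round g - 1, honest i u, ?_, ?_⟩
    · rw [hx] at hy; split_ifs at hy <;> omega
    · rw [manipPick_honest hu, if_pos ⟨hyu'.1, by omega⟩, Nat.sub_add_cancel (by omega)]
  · refine ⟨round g, honest i u, ?_, ?_⟩
    · rw [hx] at hy; split_ifs at hy <;> omega
    · rw [manipPick_honest hu, if_neg (by omega)]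

theorem manipPref_member_greedy (i : Fin c) {w : ℕ} (hw : w < (c + 1) * D ^ c) {g : Good c D}
    (h : (manipPref (member i)).idxOf g <
      (manipPref (member i)).idxOf (manipPick w (member i : Agent c D))) :
    ∃ w' < w, manipPick w' (member i : Agent c D) = g := by
  have hR := numRounds_eq (c := c) (D := D)
  have hwin := window_le (D := D) i.isLt
  have hwin' := window_le_gain (c := c) (D := D) i
  rw [manipPref_member, idxOf_listByClass_lt_iff, Prod.Lex.toLex_lt_toLex,
    manipClass_manipPick_member i hw] at h
  rcases manipClass_cases i g with
    ⟨hg, hr, hcol⟩ | ⟨hg, hr, hr', j, hcol⟩ | ⟨hg, hr, hcol⟩ | hg <;> rw [hg] at h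
  · refine ⟨round g, ?_, by rw [manipPick_member_of_lt_window hr, ← hcol, good_round_column]⟩
    by_cases h₁ : w < window D i
    · rw [if_pos h₁, manipPick_member_of_lt_window h₁, lt_good_iff (by omega), hcol] at h
      simp only [lt_irrefl, true_and, false_or] at h
      rcases h with h | ⟨rfl, h⟩
      · exact h
      · exact absurd h (lt_irrefl _)
    · omega
  · refine ⟨window D i + ((round g - D ^ (i : ℕ)) * c + j), ?_,
      by rw [manipPick_member_level hr hr', ← hcol, good_round_column]⟩
    by_cases h₂ : w < gain c D i
    · by_cases h₁ : w < window D i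
      · simp [h₁] at h
      obtain ⟨y, j', hy, hy', rfl⟩ := exists_level_of_window_le (not_lt.1 h₁) h₂
      rw [if_neg h₁, if_pos h₂, manipPick_member_level hy hy', lt_good_iff (by omega), hcol,
        member_lt_member] at h
      simp only [lt_irrefl, true_and, false_or] at h
      have := level_turn_lt_level_turn hr h
      omega
    · have := level_turn_lt_gain j hr hr'; omega
  · refine ⟨gain c D i + (round g - D ^ c), ?_, by rw [manipPick_member_of_gain_le (by omega),
      Nat.add_sub_cancel_left, Nat.add_sub_cancel' hr, ← hcol, good_round_column]⟩
    split_ifs at h with h₁ h₂ <;> try simp at h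
    rw [manipPick_member_of_gain_le (by omega), lt_good_iff (by omega), hcol] at h
    simp only [lt_irrefl, and_false, or_false] at h
    omega
  · split_ifs at h <;> simp at h

theorem manipPref_greedy {w : ℕ} (hw : w < (c + 1) * D ^ c) (a : Agent c D) (g : Good c D)
    (h : (manipPref a).idxOf g < (manipPref a).idxOf (manipPick w a)) :
    ∃ w' a', (w' < w ∨ w' = w ∧ a' < a) ∧ manipPick w' a' = g := by
  rcases member_or_honest a with ⟨i, rfl⟩ | ⟨i, u, hu, rfl⟩
  · obtain ⟨w', hw', e⟩ := manipPref_member_greedy i hw h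
    exact ⟨w', member i, Or.inl hw', e⟩
  · exact manipPref_honest_greedy i hu hw h

theorem valued_manipPick_member (i : Fin c) {w : ℕ} (hw : w < gain c D i) :
    Valued i (manipPick w (member i : Agent c D)) := by
  have hwin := window_le (D := D) i.isLt
  rcases manipPick_member_cases (D := D) i (w := w) with
    ⟨h₁, e⟩ | ⟨y, j, hy, hy', rfl, e⟩ | ⟨h₁, e⟩ <;> rw [e]
  · rw [Valued, round_good (by rw [numRounds_eq]; omega), column_good]
    exact ⟨h₁, Or.inr (Or.inl rfl)⟩
  · rw [Valued, round_good (by rw [numRounds_eq]; omega), column_good]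
    exact ⟨hy', Or.inr (Or.inr ⟨hy, slot_member j⟩)⟩
  · omega

variable (hn : 0 < numAgents c D)

theorem image_manipPick_subset_rr (a : Agent c D) :
    (range ((c + 1) * D ^ c)).image (manipPick · a) ⊆ rr _ hn manipPref a := by
  rw [← rrState_bundle_of_schedule hn _ isOrder_manipPref manipPick _
    (fun w hw w' hw' _ _ h => manipPick_injOn hw hw' h) (fun w hw => manipPref_greedy hw) a]
  refine rrState_bundle_mono hn _ ?_ a
  rw [Fintype.card_fin, numRounds_eq]
  exact Nat.mul_le_mul_right _ (Nat.le_add_right _ _)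

theorem gain_le_sum_valuation_manipPref (i : Fin c) :
    (gain c D i : ℝ) ≤ ∑ g ∈ rr _ hn manipPref (member i), valuation (member i) g := by
  calc (gain c D i : ℝ)
      = ∑ w ∈ range (gain c D i), valuation (member i) (manipPick w (member i)) := by
        rw [sum_congr rfl fun w hw => by
          rw [valuation_member, if_pos (valued_manipPick_member i (mem_range.1 hw))]]
        simp
    _ ≤ ∑ w ∈ range ((c + 1) * D ^ c), valuation (member i) (manipPick w (member i)) :=
        sum_le_sum_of_subset_of_nonneg (range_subset_range.2 (gain_le i.isLt))
          fun _ _ _ => valuation_nonneg _ _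
    _ = ∑ g ∈ (range ((c + 1) * D ^ c)).image (manipPick · (member i)),
          valuation (member i) g :=
        (sum_image fun w hw w' hw' h =>
          (manipPick_injOn (mem_range.1 hw) (mem_range.1 hw') h).1).symm
    _ ≤ _ := sum_le_sum_of_subset_of_nonneg (image_manipPick_subset_rr hn _)
          fun _ _ _ => valuation_nonneg _ _

end Manipulation

end GIRLowerBound

open GIRLowerBound

/-- GIR lower bound `c + 1` for Round-Robin: for every `ε > 0`
there is an instance and a coalition of size `c` whose every member gains at
least a factor `c + 1 − ε`. -/
theorem stmt17 (c : ℕ) (hc : 1 ≤ c) (ε : ℝ) (hε : 0 < ε) :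
    ∃ (n m : ℕ) (hn : 0 < n) (v : Fin n → Fin m → ℝ)
      (pref pref' : Fin n → List (Fin m)) (C : Finset (Fin n)),
      (∀ a g, 0 ≤ v a g) ∧
      (∀ a, IsOrder (pref a)) ∧ (∀ a, IsOrder (pref' a)) ∧
      (∀ a, Consistent (v a) (pref a)) ∧
      C.card = c ∧ (∀ a ∉ C, pref' a = pref a) ∧
      ∀ a ∈ C,
        0 < (∑ g ∈ rr n hn pref a, v a g) ∧
        ((c : ℝ) + 1 - ε) * (∑ g ∈ rr n hn pref a, v a g) ≤
          ∑ g ∈ rr n hn pref' a, v a g := by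
  have : NeZero c := ⟨by omega⟩
  set D := ⌈(c : ℝ) / ε⌉₊
  have hcD : (c : ℝ) ≤ ε * D := by
    rw [mul_comm, ← div_le_iff₀ hε]; exact Nat.le_ceil _
  have : NeZero D := ⟨(Nat.ceil_pos.2 (by positivity)).ne'⟩
  refine ⟨numAgents c D, _, Nat.pos_of_neZero _, valuation, truthPref, manipPref,
    univ.map ⟨member, member_injective⟩, valuation_nonneg, fun a => isOrder_listByClass _,
    isOrder_manipPref, consistent_truthPref, by simp, fun a ha => ?_, fun a ha => ?_⟩
  · rcases member_or_honest a with ⟨i, rfl⟩ | ⟨i, u, hu, rfl⟩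
    · simp at ha
    · exact manipPref_honest i hu
  · obtain ⟨i, -, rfl⟩ := mem_map.1 ha
    rw [Function.Embedding.coeFn_mk, sum_valuation_truthPref]
    exact ⟨by exact_mod_cast window_pos i,
      (mul_window_le_gain hcD i).trans (gain_le_sum_valuation_manipPref _ i)⟩
end

section
/- The strong group incentive ratio of Round-Robin is unbounded for coalitions of size 2: for every R ≥ 1, there exists an instance with n = 3 agents and m = 4 indivisible goods, additive valuations v_1, v_2, v_3, a profile of strict orderings ≻ with v_a consistent with ≻_a for every a, and manipulated orderings ≻'_1, ≻'_2 for the coalition C = {1, 2}, such that v_a(RR_a(≻'_1, ≻'_2, ≻_3)) ≥ v_a(RR_a(≻)) for both a ∈ {1, 2}, v_2(RR_2(≻)) > 0, and v_2(RR_2(≻'_1, ≻'_2, ≻_3)) > R·v_2(RR_2(≻)). Consequently, for every c ≥ 2 no finite R satisfies the SGIR(c) condition for Round-Robin. -/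
/-- `R` satisfies the SGIR(`c`) condition for Round-Robin: over all instances,
whenever a coalition of size at most `c` misreports and every corrupted agent is
weakly better off, every corrupted agent gains at most a factor `R`. -/
def RRSGIRCond (c : ℕ) (R : ℝ) : Prop :=
  ∀ (n m : ℕ) (hn : 0 < n) (v : Fin n → Fin m → ℝ)
    (pref pref' : Fin n → List (Fin m)) (C : Finset (Fin n)),
    (∀ a g, 0 ≤ v a g) →
    (∀ a, IsOrder (pref a)) → (∀ a, IsOrder (pref' a)) →
    (∀ a, Consistent (v a) (pref a)) →
    C.card ≤ c → (∀ a ∉ C, pref' a = pref a) →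
    (∀ a ∈ C, (∑ g ∈ rr n hn pref a, v a g) ≤ ∑ g ∈ rr n hn pref' a, v a g) →
    ∀ a ∈ C, (∑ g ∈ rr n hn pref' a, v a g) ≤ R * ∑ g ∈ rr n hn pref a, v a g

/-- `R` satisfies the GIR(`c`) condition for Round-Robin: over all instances and
all misreports by a coalition of size at most `c`, some corrupted agent gains at
most a factor `R`. -/
def RRGIRCond (c : ℕ) (R : ℝ) : Prop :=
  ∀ (n m : ℕ) (hn : 0 < n) (v : Fin n → Fin m → ℝ)
    (pref pref' : Fin n → List (Fin m)) (C : Finset (Fin n)),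
    (∀ a g, 0 ≤ v a g) →
    (∀ a, IsOrder (pref a)) → (∀ a, IsOrder (pref' a)) →
    (∀ a, Consistent (v a) (pref a)) →
    C.Nonempty → C.card ≤ c → (∀ a ∉ C, pref' a = pref a) →
    ∃ a ∈ C, (∑ g ∈ rr n hn pref' a, v a g) ≤ R * ∑ g ∈ rr n hn pref a, v a g

/-!
Everybody reports `0 ≻ 1 ≻ 2 ≻ 3`, so agent `0` takes good `0` and agent `1` is left with good
`1`, worth `1` to him, while good `0` is worth `R + 1` to him. Agent `0` is indifferent between
goods `0` and `1`: by ranking good `1` first he loses nothing and hands good `0` to agent `1`,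
who thereby gains the factor `R + 1 > R`.
-/

theorem isOrder_finRange (m : ℕ) : IsOrder (List.finRange m) :=
  ⟨List.nodup_finRange m, List.mem_finRange⟩

theorem consistent_finRange_of_antitone {m : ℕ} {v : Fin m → ℝ} (hv : Antitone v) :
    Consistent v (List.finRange m) := by
  intro g g' h
  simpa using hv.reflect_lt h

def sincere : Fin 3 → List (Fin 4) := fun _ => List.finRange 4

def colluding : Fin 3 → List (Fin 4) := Function.update sincere 0 [1, 0, 2, 3]

def gainValuation (R : ℝ) : Fin 3 → Fin 4 → ℝ :=
  ![![1, 1, 0, 0], ![R + 1, 1, 0, 0], ![1, 1, 0, 0]]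

theorem isOrder_colluding (a : Fin 3) : IsOrder (colluding a) := by
  fin_cases a <;> exact ⟨by decide, by decide⟩

theorem gainValuation_nonneg {R : ℝ} (hR : 0 ≤ R) (a : Fin 3) (g : Fin 4) :
    0 ≤ gainValuation R a g := by
  fin_cases a <;> fin_cases g <;> simp [gainValuation]
  linarith

theorem consistent_gainValuation_sincere {R : ℝ} (hR : 0 ≤ R) (a : Fin 3) :
    Consistent (gainValuation R a) (sincere a) := by
  refine consistent_finRange_of_antitone (Fin.antitone_iff_succ_le.2 fun i => ?_)
  fin_cases a <;> fin_cases i <;> simp [gainValuation]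
  linarith

theorem rr_sincere_zero : rr 3 (Nat.succ_pos 2) sincere 0 = {0, 3} := by decide
theorem rr_sincere_one : rr 3 (Nat.succ_pos 2) sincere 1 = {1} := by decide
theorem rr_colluding_zero : rr 3 (Nat.succ_pos 2) colluding 0 = {1, 3} := by decide
theorem rr_colluding_one : rr 3 (Nat.succ_pos 2) colluding 1 = {0} := by decide

theorem value_sincere_zero (R : ℝ) :
    ∑ g ∈ rr 3 (Nat.succ_pos 2) sincere 0, gainValuation R 0 g = 1 := by
  simp [rr_sincere_zero, gainValuation]

theorem value_colluding_zero (R : ℝ) :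
    ∑ g ∈ rr 3 (Nat.succ_pos 2) colluding 0, gainValuation R 0 g = 1 := by
  simp [rr_colluding_zero, gainValuation]

theorem value_sincere_one (R : ℝ) :
    ∑ g ∈ rr 3 (Nat.succ_pos 2) sincere 1, gainValuation R 1 g = 1 := by
  simp [rr_sincere_one, gainValuation]

theorem value_colluding_one (R : ℝ) :
    ∑ g ∈ rr 3 (Nat.succ_pos 2) colluding 1, gainValuation R 1 g = R + 1 := by
  simp [rr_colluding_one, gainValuation]

theorem coalition_weakly_better {R : ℝ} (hR : 0 ≤ R) (a : Fin 3) (ha : (a : ℕ) < 2) :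
    ∑ g ∈ rr 3 (Nat.succ_pos 2) sincere a, gainValuation R a g ≤
      ∑ g ∈ rr 3 (Nat.succ_pos 2) colluding a, gainValuation R a g := by
  match a, ha with
  | 0, _ => rw [value_sincere_zero, value_colluding_zero]
  | 1, _ => rw [value_sincere_one, value_colluding_one]; linarith

/-- Agents are `0`-indexed: the coalition `{1, 2}` of the paper is `{0, 1}` here. -/
theorem stmt18 :
    (∀ R : ℝ, 1 ≤ R →
      ∃ (v : Fin 3 → Fin 4 → ℝ) (pref pref' : Fin 3 → List (Fin 4)),
        (∀ a g, 0 ≤ v a g) ∧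
        (∀ a, IsOrder (pref a)) ∧ (∀ a, IsOrder (pref' a)) ∧
        (∀ a, Consistent (v a) (pref a)) ∧
        pref' 2 = pref 2 ∧
        (∀ a : Fin 3, (a : ℕ) < 2 →
          (∑ g ∈ rr 3 (Nat.succ_pos 2) pref a, v a g) ≤
            ∑ g ∈ rr 3 (Nat.succ_pos 2) pref' a, v a g) ∧
        0 < (∑ g ∈ rr 3 (Nat.succ_pos 2) pref 1, v 1 g) ∧
        R * (∑ g ∈ rr 3 (Nat.succ_pos 2) pref 1, v 1 g) <
          ∑ g ∈ rr 3 (Nat.succ_pos 2) pref' 1, v 1 g) ∧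
    ∀ c : ℕ, 2 ≤ c → ∀ R : ℝ, 1 ≤ R → ¬ RRSGIRCond c R := by
  have hR₀ {R : ℝ} (hR : 1 ≤ R) : 0 ≤ R := by linarith
  refine ⟨fun R hR => ⟨gainValuation R, sincere, colluding, gainValuation_nonneg (hR₀ hR),
    fun _ => isOrder_finRange 4, isOrder_colluding, consistent_gainValuation_sincere (hR₀ hR),
    rfl, coalition_weakly_better (hR₀ hR), ?_, ?_⟩, ?_⟩
  · rw [value_sincere_one]; exact one_pos
  · rw [value_sincere_one, value_colluding_one]; linarith
  intro c hc R hR hSGIR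
  have hbound := hSGIR 3 4 (Nat.succ_pos 2) (gainValuation R) sincere colluding {0, 1}
    (gainValuation_nonneg (hR₀ hR)) (fun _ => isOrder_finRange 4) isOrder_colluding
    (consistent_gainValuation_sincere (hR₀ hR)) (by simpa using hc)
    (fun a ha => Function.update_of_ne (by rintro rfl; simp at ha) _ _)
    (fun a ha => coalition_weakly_better (hR₀ hR) a (by fin_cases a <;> simp_all)) 1 (by simp)
  rw [value_sincere_one, value_colluding_one] at hbound
  linarith
end
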